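/- If w = u·(q−2) is a Lyndon word of length n over Σ = {0 < 1 < ⋯ < q−1} with q ≥ 2, then u·(q−1) is also a Lyndon word. -/

import Mathlib

/-!
Raising the last letter of `u·a` to `b > a` changes a nontrivial rotation `v·a·v'` of it only
in that same letter. Since the rotated copy of the last letter sits strictly earlier than the
last letter of `u·a`, a comparison `u·a < v·a·v'` is decided before or at that position, and
there raising both occurrences of `a` keeps (or creates) the strict inequality.
-/

/-- A word is a Lyndon word if it is strictly lexicographically smaller than all its
nontrivial cyclic rotations. -/
def IsLyndonList {A : Type*} [LinearOrder A] (w : List A) : Prop :=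
  ∀ i, 0 < i → i < w.length → w < w.rotate i

namespace List

variable {α : Type*}

theorem rotate_append_singleton {u : List α} (x : α) {i : ℕ} (hi : i ≤ u.length) :
    (u ++ [x]).rotate i = u.drop i ++ x :: u.take i := by
  rw [rotate_eq_drop_append_take (by simp; omega), drop_append_of_le_length hi,
    take_append_of_le_length hi, append_assoc, singleton_append]

theorem Lex.append_singleton_of_rel {r : α → α → Prop} [IsTrans α r] {a b : α} (hab : r a b)
    {u v w : List α} (hvu : v.length < u.length) (h : Lex r (u ++ [a]) (v ++ a :: w)) :
    Lex r (u ++ [b]) (v ++ b :: w) := by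
  induction v generalizing u with
  | nil =>
    obtain _ | ⟨c, u⟩ := u
    · simp at hvu
    cases h with
    | rel hca => exact .rel (_root_.trans hca hab)
    | cons => exact .rel hab
  | cons e v ih =>
    obtain _ | ⟨c, u⟩ := u
    · simp at hvu
    cases h with
    | rel hce => exact .rel hce
    | cons h => exact .cons (ih (by simpa using hvu) h)

end List

theorem IsLyndonList.append_singleton_of_lt {α : Type*} [LinearOrder α] {u : List α} {a b : α}
    (hab : a < b) (h : IsLyndonList (u ++ [a])) : IsLyndonList (u ++ [b]) := by
  intro i hi0 hi
  have hiu : i ≤ u.length := by simp at hi; omega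
  have hlex := h i hi0 (by simpa using hi)
  rw [List.rotate_append_singleton a hiu] at hlex
  rw [List.rotate_append_singleton b hiu]
  exact List.Lex.append_singleton_of_rel hab (by simp; omega) hlex

theorem stmt9 (q : ℕ) (hq : 2 ≤ q) (u : List (Fin q))
    (hw : IsLyndonList (u ++ [(⟨q - 2, by omega⟩ : Fin q)])) :
    IsLyndonList (u ++ [(⟨q - 1, by omega⟩ : Fin q)]) :=
  hw.append_singleton_of_lt (Fin.mk_lt_mk.mpr (by omega))
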